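/- Let X_{AB}, Y_{AB} be positive definite on H_A ⊗ H_B, ω_A a positive definite density operator on H_A, τ_{AB} = X_{AB}^{1/2}((X_A^{-1/2} ω_A X_A^{-1/2}) ⊗ I_B) X_{AB}^{1/2}, and V the isometry V = X_{AB}^{1/2}(X_A^{-1/2} ⊗ I_Â)|Γ⟩_{BB̂}. Then V†(τ_{AB}^{-1} ⊗ Y_{ÂB̂}ᵀ)V = ω_A^{-1} ⊗ Y_Âᵀ, where Y_Â = Tr_B̂ Y_{ÂB̂}. -/

import Mathlib

open Matrix Kronecker BigOperators
open scoped Classical ComplexOrder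

/-- Apply a real function to a Hermitian matrix via the functional calculus
(eigenvalue decomposition); junk value `0` on non-Hermitian input. -/
noncomputable def matFun {n : Type} [Fintype n] [DecidableEq n]
    (f : ℝ → ℝ) (A : Matrix n n ℂ) : Matrix n n ℂ :=
  if hA : A.IsHermitian then
    (hA.eigenvectorUnitary : Matrix n n ℂ) *
      Matrix.diagonal (fun i => (f (hA.eigenvalues i) : ℂ)) *
      (star (hA.eigenvectorUnitary : Matrix n n ℂ))
  else 0

/-- The unnormalized maximally entangled vector `∑ i, |i⟩⊗|i⟩`. -/
def gammaVec (n : Type) [DecidableEq n] : n × n → ℂ :=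
  fun p => if p.1 = p.2 then 1 else 0

/-- Partial trace over the second tensor factor. -/
noncomputable def ptraceB {a b : Type} [Fintype b]
    (X : Matrix (a × b) (a × b) ℂ) : Matrix a a ℂ :=
  fun i j => ∑ k, X (i, k) (j, k)

/-- Matrix power `A ^ p` (real exponent) via the functional calculus. -/
noncomputable def mpow {n : Type} [Fintype n] [DecidableEq n]
    (A : Matrix n n ℂ) (p : ℝ) : Matrix n n ℂ :=
  matFun (fun x => x ^ p) A

/-- Square root of a positive semidefinite matrix, as `Matrix.PosSemidef.sqrt` was defined in
Mathlib of December 2024 (removed since). -/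
noncomputable def Matrix.PosSemidef.sqrt {n 𝕜 : Type*} [Fintype n] [RCLike 𝕜] [DecidableEq n]
    {A : Matrix n n 𝕜} (hA : A.PosSemidef) : Matrix n n 𝕜 :=
  hA.1.eigenvectorUnitary.1 * diagonal ((↑) ∘ (√·) ∘ hA.1.eigenvalues) *
    (star hA.1.eigenvectorUnitary : Matrix n n 𝕜)

/-- See stmt_8: the Petz-recovery isometry as a matrix. -/
noncomputable def petzIso {a b : Type} [Fintype a] [Fintype b] [DecidableEq a] [DecidableEq b]
    (M : Matrix (a × b) (a × b) ℂ) :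
    Matrix ((a × b) × (a × b)) (a × a) ℂ :=
  fun o p => M o.1 (p.1, o.2.2) * (if o.2.1 = p.2 then 1 else 0)

/-! With `M = X_{AB}^{1/2} (X_A^{-1/2} ⊗ I_B)` one has `τ_{AB} = M (ω_A ⊗ I_B) M†`, hence
`M† τ_{AB}⁻¹ M = ω_A⁻¹ ⊗ I_B`. Factoring `V = (M ⊗ I_{ÂB̂}) (I_A ⊗ |Γ⟩_{BB̂} ⊗ I_Â)` turns
`V† (τ_{AB}⁻¹ ⊗ Y_{ÂB̂}ᵀ) V` into the contraction of `ω_A⁻¹ ⊗ I_B ⊗ Y_{ÂB̂}ᵀ` with `|Γ⟩_{BB̂}`,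
which is a partial trace over `B̂`. -/

namespace Matrix.PosSemidef

variable {n 𝕜 : Type*} [Fintype n] [RCLike 𝕜] [DecidableEq n] {A : Matrix n n 𝕜}

lemma isHermitian_sqrt (hA : A.PosSemidef) : hA.sqrt.IsHermitian := by
  have hD : (diagonal ((↑) ∘ (√·) ∘ hA.1.eigenvalues : n → 𝕜)).IsHermitian :=
    isHermitian_diagonal_of_self_adjoint _ <| funext fun i => by simp
  rw [sqrt, star_eq_conjTranspose]
  exact isHermitian_mul_mul_conjTranspose _ hD

lemma sqrt_mul_self (hA : A.PosSemidef) : hA.sqrt * hA.sqrt = A := by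
  have hD : diagonal ((↑) ∘ (√·) ∘ hA.1.eigenvalues : n → 𝕜) *
      diagonal ((↑) ∘ (√·) ∘ hA.1.eigenvalues : n → 𝕜) =
      diagonal (RCLike.ofReal ∘ hA.1.eigenvalues) := by
    rw [diagonal_mul_diagonal]
    congr 1
    funext i
    simp [← RCLike.ofReal_mul, Real.mul_self_sqrt (hA.eigenvalues_nonneg i)]
  conv_rhs => rw [hA.1.spectral_theorem, Unitary.conjStarAlgAut_apply]
  have hU : star (hA.1.eigenvectorUnitary : Matrix n n 𝕜) * hA.1.eigenvectorUnitary = 1 :=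
    Unitary.star_mul_self_of_mem hA.1.eigenvectorUnitary.2
  simp only [sqrt, Matrix.mul_assoc]
  rw [← Matrix.mul_assoc (star _) _, hU, Matrix.one_mul, ← Matrix.mul_assoc (diagonal _), hD]

end Matrix.PosSemidef

lemma Matrix.PosDef.isUnit_sqrt {n 𝕜 : Type*} [Fintype n] [RCLike 𝕜] [DecidableEq n]
    {A : Matrix n n 𝕜} (hA : A.PosDef) : IsUnit hA.posSemidef.sqrt := by
  rw [isUnit_iff_isUnit_det]
  refine isUnit_of_mul_isUnit_left (y := hA.posSemidef.sqrt.det) ?_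
  rw [← det_mul, hA.posSemidef.sqrt_mul_self, ← isUnit_iff_isUnit_det]
  exact hA.isUnit

lemma Matrix.conjTranspose_mul_inv_mul_mul_conjTranspose_mul {n α : Type*} [Fintype n]
    [DecidableEq n] [CommRing α] [StarRing α] {M : Matrix n n α} (hM : IsUnit M)
    (D : Matrix n n α) :
    Mᴴ * (M * D * Mᴴ)⁻¹ * M = D⁻¹ := by
  have hM' : IsUnit Mᴴ := hM.star
  rw [isUnit_iff_isUnit_det] at hM hM'
  rw [mul_inv_rev, mul_inv_rev, ← Matrix.mul_assoc, ← Matrix.mul_assoc,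
    mul_nonsing_inv _ hM', Matrix.one_mul]
  exact nonsing_inv_mul_cancel_right _ _ hM

lemma ptraceB_transpose {a b : Type} [Fintype b] (Y : Matrix (a × b) (a × b) ℂ) :
    ptraceB Yᵀ = (ptraceB Y)ᵀ :=
  rfl

/-- `I_A ⊗ |Γ⟩_{BB̂} ⊗ I_Â`, with rows indexed by `(A × B) × (Â × B̂)` and columns by `A × Â`. -/
def idKronGamma (a b : Type) [DecidableEq a] [DecidableEq b] :
    Matrix ((a × b) × (a × b)) (a × a) ℂ :=
  fun o p => (if o.1.1 = p.1 then 1 else 0) * (if o.2.1 = p.2 then 1 else 0) *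
    gammaVec b (o.1.2, o.2.2)

section
variable {a b : Type} [Fintype a] [Fintype b] [DecidableEq a] [DecidableEq b]

lemma petzIso_eq_kronecker_one_mul (M : Matrix (a × b) (a × b) ℂ) :
    petzIso M = (M ⊗ₖ (1 : Matrix (a × b) (a × b) ℂ)) * idKronGamma a b := by
  ext ⟨⟨i, j⟩, k, l⟩ ⟨i', k'⟩
  simp [petzIso, idKronGamma, gammaVec, mul_apply, one_apply, Fintype.sum_prod_type, ite_and]

lemma conjTranspose_idKronGamma_mul_kronecker_mul_idKronGamma (W : Matrix a a ℂ)
    (Y : Matrix (a × b) (a × b) ℂ) :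
    (idKronGamma a b)ᴴ * ((W ⊗ₖ (1 : Matrix b b ℂ)) ⊗ₖ Y) * idKronGamma a b =
      W ⊗ₖ ptraceB Y := by
  ext ⟨i, k⟩ ⟨i', k'⟩
  simp [idKronGamma, gammaVec, ptraceB, mul_apply, one_apply, Fintype.sum_prod_type,
    apply_ite (starRingEnd ℂ), Finset.mul_sum]

lemma conjTranspose_petzIso_mul_kronecker_mul_petzIso {M Z : Matrix (a × b) (a × b) ℂ}
    {W : Matrix a a ℂ} (h : Mᴴ * Z * M = W ⊗ₖ (1 : Matrix b b ℂ)) (Y : Matrix (a × b) (a × b) ℂ) :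
    (petzIso M)ᴴ * (Z ⊗ₖ Y) * petzIso M = W ⊗ₖ ptraceB Y := by
  rw [petzIso_eq_kronecker_one_mul, conjTranspose_mul, conjTranspose_kronecker,
    conjTranspose_one, ← conjTranspose_idKronGamma_mul_kronecker_mul_idKronGamma, ← h]
  calc _ = (idKronGamma a b)ᴴ * ((Mᴴ ⊗ₖ 1) * (Z ⊗ₖ Y) * (M ⊗ₖ 1)) * idKronGamma a b := by
        simp only [Matrix.mul_assoc]
    _ = _ := by rw [← mul_kronecker_mul, ← mul_kronecker_mul, Matrix.one_mul, Matrix.mul_one]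

end

theorem stmt_10_general (a b : ℕ) (XAB YAB : Matrix (Fin a × Fin b) (Fin a × Fin b) ℂ)
    (hXAB : XAB.PosDef) (hXA : (ptraceB XAB).PosDef)
    (ω : Matrix (Fin a) (Fin a) ℂ) :
    (petzIso (hXAB.posSemidef.sqrt *
        ((hXA.posSemidef.sqrt⁻¹) ⊗ₖ (1 : Matrix (Fin b) (Fin b) ℂ))))ᴴ *
      (((hXAB.posSemidef.sqrt *
          (((hXA.posSemidef.sqrt⁻¹ * ω * hXA.posSemidef.sqrt⁻¹) ⊗ₖ
              (1 : Matrix (Fin b) (Fin b) ℂ))) * hXAB.posSemidef.sqrt)⁻¹) ⊗ₖ YABᵀ) *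
      petzIso (hXAB.posSemidef.sqrt *
        ((hXA.posSemidef.sqrt⁻¹) ⊗ₖ (1 : Matrix (Fin b) (Fin b) ℂ))) =
    ω⁻¹ ⊗ₖ (ptraceB YAB)ᵀ := by
  set S := hXAB.posSemidef.sqrt
  set T := hXA.posSemidef.sqrt
  set M := S * (T⁻¹ ⊗ₖ (1 : Matrix (Fin b) (Fin b) ℂ)) with hM
  have hM_unit : IsUnit M :=
    hXAB.isUnit_sqrt.mul <| (isUnit_nonsing_inv_iff.2 hXA.isUnit_sqrt).kronecker isUnit_one
  have hS : Sᴴ = S := hXAB.posSemidef.isHermitian_sqrt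
  have hT : Tᴴ = T := hXA.posSemidef.isHermitian_sqrt
  have hτ : S * ((T⁻¹ * ω * T⁻¹) ⊗ₖ (1 : Matrix (Fin b) (Fin b) ℂ)) * S =
      M * (ω ⊗ₖ 1) * Mᴴ := by
    have hK : (T⁻¹ * ω * T⁻¹) ⊗ₖ (1 : Matrix (Fin b) (Fin b) ℂ) =
        (T⁻¹ ⊗ₖ 1) * (ω ⊗ₖ 1) * (T⁻¹ ⊗ₖ 1) := by
      rw [← mul_kronecker_mul, ← mul_kronecker_mul, Matrix.one_mul, Matrix.one_mul]
    rw [hK, hM, conjTranspose_mul, conjTranspose_kronecker, conjTranspose_nonsing_inv,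
      hS, hT, conjTranspose_one]
    simp only [Matrix.mul_assoc]
  rw [hτ, ← ptraceB_transpose]
  refine conjTranspose_petzIso_mul_kronecker_mul_petzIso ?_ _
  rw [conjTranspose_mul_inv_mul_mul_conjTranspose_mul hM_unit, inv_kronecker, inv_one]

/-- For `τ_{AB}` the Petz-recovery output of `ω_A` and `V` the Petz-recovery isometry,
`V†(τ_{AB}⁻¹ ⊗ Y_{ÂB̂}ᵀ)V = ω_A⁻¹ ⊗ Y_Âᵀ`. -/
theorem stmt_10 (a b : ℕ) (XAB YAB : Matrix (Fin a × Fin b) (Fin a × Fin b) ℂ)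
    (hXAB : XAB.PosDef) (hYAB : YAB.PosDef) (hXA : (ptraceB XAB).PosDef)
    (ω : Matrix (Fin a) (Fin a) ℂ) (hω : ω.PosDef) (hω1 : ω.trace = 1) :
    (petzIso (hXAB.posSemidef.sqrt *
        ((hXA.posSemidef.sqrt⁻¹) ⊗ₖ (1 : Matrix (Fin b) (Fin b) ℂ))))ᴴ *
      (((hXAB.posSemidef.sqrt *
          (((hXA.posSemidef.sqrt⁻¹ * ω * hXA.posSemidef.sqrt⁻¹) ⊗ₖ
              (1 : Matrix (Fin b) (Fin b) ℂ))) * hXAB.posSemidef.sqrt)⁻¹) ⊗ₖ YABᵀ) *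
      petzIso (hXAB.posSemidef.sqrt *
        ((hXA.posSemidef.sqrt⁻¹) ⊗ₖ (1 : Matrix (Fin b) (Fin b) ℂ))) =
    ω⁻¹ ⊗ₖ (ptraceB YAB)ᵀ :=
  stmt_10_general a b XAB YAB hXAB hXA ω
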